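/- Let F₁, F₂ be two copies of a k-uniform hypergraph F appearing as a (not necessarily consecutive) subsequence of a vertex-separated loose path of copies of F, where (F, f) is balanced for every f ∈ F. Let I := V(F₁) ∩ V(F₂). Then |I| = k or |I| ≤ k − 1/ρ_F, where ρ_F is the k-density of F. Consequently, if A is a k-graph with exactly one edge and no isolated vertices and I ⊆ V(A), then ρ_{A,I} ≤ ρ_F. -/
import Mathlib


open Finset

/-- The vertex set (support) of a hypergraph given by its edge set. -/
def verts (A : Finset (Finset ℕ)) : Finset ℕ := A.sup id

/-- The edge set of the induced subhypergraph `A[U]`. -/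
def ind (A : Finset (Finset ℕ)) (U : Finset ℕ) : Finset (Finset ℕ) := A.filter (· ⊆ U)

/-- The density of the template `(A[U], I)`, where `A[U]` carries the vertex set `U`:
`(e(A[U]) - e(A[I])) / (|U| - |I|)`, and `0` if `U = I`. -/
def dens (A : Finset (Finset ℕ)) (U I : Finset ℕ) : ℚ :=
  if U = I then 0
  else (((ind A U).card : ℚ) - ((ind A I).card : ℚ)) / ((U.card : ℚ) - (I.card : ℚ))

/-- The density `ρ_{A,I}` of the template `(A, I)` (whose vertex set is `verts A ∪ I`). -/
def tdens (A : Finset (Finset ℕ)) (I : Finset ℕ) : ℚ := dens A (verts A ∪ I) I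

/-- The `k`-density `ρ_A = (e(A) - 1)/(v(A) - k)` of a `k`-uniform hypergraph. -/
def kdens (k : ℕ) (A : Finset (Finset ℕ)) : ℚ :=
  ((A.card : ℚ) - 1) / (((verts A).card : ℚ) - (k : ℚ))

/-- The template `(A, I)` is strictly balanced: every proper subtemplate `(B, I) ⊆ (A, I)`
(`B = A[U]` with vertex set `U`, `I ⊆ U`, `V(B) = U ≠ I`, `B ≠ A`) has strictly smaller
density. -/
def StrictBalT (A : Finset (Finset ℕ)) (I : Finset ℕ) : Prop :=
  ∀ U : Finset ℕ, I ⊆ U → U ⊂ verts A ∪ I → U ≠ I → dens A U I < tdens A I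

/-- The union of the hypergraphs `B j` over `j ∈ s`. -/
def pUnion (B : ℕ → Finset (Finset ℕ)) (s : Finset ℕ) : Finset (Finset ℕ) := s.biUnion B

/-- `qfun B i = 1 + ∑_{j < i} (|B j| - 1)`. -/
def qfun (B : ℕ → Finset (Finset ℕ)) (i : ℕ) : ℕ :=
  1 + ∑ j ∈ Finset.range i, ((B j).card - 1)

/-- `B 0, …, B (n-1)` is a vertex-separated loose path starting at `I`: there is an
enumeration `e 0, …, e (qfun B n - 1)` of the edges of `B 0 + … + B (n-1)` with `e 0 = I`,
each `B i` consisting of the block of edges with indices in `[qfun B i - 1, qfun B (i+1) - 1]`,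
such that for each `0 < i < n` the vertex sets of `B 0 + … + B (i-1)` and of
`B i + … + B (n-1)` intersect exactly in the shared edge `e (qfun B i - 1)`. -/
def IsVSLoosePath (n : ℕ) (B : ℕ → Finset (Finset ℕ)) (I : Finset ℕ) : Prop :=
  ∃ e : ℕ → Finset ℕ,
    (∀ i < qfun B n, ∀ j < qfun B n, e i = e j → i = j) ∧
    e 0 = I ∧
    (∀ i < n, B i =
      ((Finset.range (qfun B n)).filter
          (fun j => qfun B i - 1 ≤ j ∧ j ≤ qfun B (i + 1) - 1)).image e) ∧
    (∀ i, 0 < i → i < n →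
      verts (pUnion B (Finset.range i)) ∩
          verts (pUnion B ((Finset.range n).filter (fun j => i ≤ j))) =
        e (qfun B i - 1))

/-- `B'` is a copy of `F`. -/
def IsCopy (F B' : Finset (Finset ℕ)) : Prop :=
  ∃ φ : ℕ → ℕ, Set.InjOn φ ↑(verts F) ∧ B' = F.image (fun f => f.image φ)

lemma edge_subset_verts {A : Finset (Finset ℕ)} {s : Finset ℕ} (h : s ∈ A) : s ⊆ verts A :=
  Finset.le_sup (f := id) h

lemma verts_mono {A A' : Finset (Finset ℕ)} (h : A ⊆ A') : verts A ⊆ verts A' :=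
  Finset.le_iff_subset.mp (Finset.sup_mono h)

lemma verts_singleton (s : Finset ℕ) : verts {s} = s := Finset.sup_singleton

lemma tdens_singleton_of_not_subset {f J : Finset ℕ} (h : ¬ f ⊆ J) :
    tdens {f} J = 1 / (((f ∪ J).card : ℚ) - (J.card : ℚ)) := by
  have hv : verts {f} = f := verts_singleton f
  have hne : f ∪ J ≠ J := fun hh => h (by rw [← hh]; exact Finset.subset_union_left)
  have h1 : ind {f} (f ∪ J) = {f} := by
    unfold ind; rw [Finset.filter_singleton, if_pos Finset.subset_union_left]
  have h2 : ind {f} J = ∅ := by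
    unfold ind; rw [Finset.filter_singleton, if_neg h]
  unfold tdens _root_.dens
  rw [hv, if_neg hne, h1, h2]
  simp

lemma inter_card_lt {k : ℕ} {f g : Finset ℕ} (hfk : f.card = k) (hgk : g.card = k)
    (hfg : f ≠ g) : (f ∩ g).card < k := by
  have hne : f ∩ g ≠ f := by
    intro hh
    have hsub : f ⊆ g := by rw [← hh]; exact Finset.inter_subset_right
    exact hfg (Finset.eq_of_subset_of_card_le hsub (by rw [hfk, hgk]))
  have := Finset.card_lt_card (Finset.ssubset_iff_subset_ne.mpr ⟨Finset.inter_subset_left, hne⟩)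
  omega

lemma kdens_pos {k : ℕ} {F : Finset (Finset ℕ)} (hFk : ∀ e ∈ F, e.card = k)
    (hF2 : 2 ≤ F.card) : 0 < kdens k F := by
  obtain ⟨f, hf, g, hg, hfg⟩ := Finset.one_lt_card.mp hF2
  have hfk := hFk f hf; have hgk := hFk g hg
  have hlt := inter_card_lt hfk hgk hfg
  have hcu : (f ∪ g).card + (f ∩ g).card = k + k := by
    rw [Finset.card_union_add_card_inter, hfk, hgk]
  have hsub : f ∪ g ⊆ verts F :=
    Finset.union_subset (edge_subset_verts hf) (edge_subset_verts hg)
  have hvk : k < (verts F).card := by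
    have := Finset.card_le_card hsub; omega
  unfold kdens
  apply div_pos
  · have : (2:ℚ) ≤ F.card := by exact_mod_cast hF2
    linarith
  · have : (k:ℚ) < (verts F).card := by exact_mod_cast hvk
    linarith

lemma key_ineq {k : ℕ} {F : Finset (Finset ℕ)} (hFk : ∀ e ∈ F, e.card = k)
    (hbal : ∀ f ∈ F, ∀ B' ⊆ F, tdens B' f ≤ kdens k F)
    {f g : Finset ℕ} (hf : f ∈ F) (hg : g ∈ F) (hfg : f ≠ g) :
    1 / ((k:ℚ) - ((f ∩ g).card : ℚ)) ≤ kdens k F := by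
  have hfk := hFk f hf; have hgk := hFk g hg
  have hns : ¬ f ⊆ g := fun hh => hfg (Finset.eq_of_subset_of_card_le hh (by rw [hfk, hgk]))
  have hb := hbal g hg {f} (Finset.singleton_subset_iff.mpr hf)
  rw [tdens_singleton_of_not_subset hns] at hb
  have hcu : (f ∪ g).card + (f ∩ g).card = k + k := by
    rw [Finset.card_union_add_card_inter, hfk, hgk]
  have hcq : ((f ∪ g).card : ℚ) + ((f ∩ g).card : ℚ) = (k:ℚ) + (k:ℚ) := by exact_mod_cast hcu
  have heq : (((f ∪ g).card : ℚ) - (g.card : ℚ)) = (k:ℚ) - ((f ∩ g).card : ℚ) := by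
    rw [hgk]; linarith
  rwa [heq] at hb

lemma copy_img_inj {F B' : Finset (Finset ℕ)} {φ : ℕ → ℕ}
    (hφ : Set.InjOn φ ↑(verts F)) {f g : Finset ℕ} (hf : f ∈ F) (hg : g ∈ F)
    (hh : f.image φ = g.image φ) : f = g := by
  have hdir : ∀ a ∈ F, ∀ b ∈ F, a.image φ ⊆ b.image φ → a ⊆ b := by
    intro a ha b hb hab x hx
    have hx' : φ x ∈ b.image φ := hab (Finset.mem_image_of_mem φ hx)
    obtain ⟨y, hy, hyx⟩ := Finset.mem_image.mp hx'
    have : y = x := hφ (Finset.mem_coe.mpr (edge_subset_verts hb hy))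
      (Finset.mem_coe.mpr (edge_subset_verts ha hx)) hyx
    rwa [← this]
  exact Finset.Subset.antisymm (hdir f hf g hg hh.le) (hdir g hg f hf hh.ge)

lemma copy_card_eq {F B' : Finset (Finset ℕ)} (h : IsCopy F B') : B'.card = F.card := by
  obtain ⟨φ, hφ, rfl⟩ := h
  exact Finset.card_image_of_injOn (fun f hf g hg => copy_img_inj (B' := F.image (fun f => f.image φ)) hφ hf hg)

lemma copy_edge_card {k : ℕ} {F B' : Finset (Finset ℕ)} (hFk : ∀ e ∈ F, e.card = k)
    (h : IsCopy F B') : ∀ s ∈ B', s.card = k := by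
  obtain ⟨φ, hφ, rfl⟩ := h
  intro s hs
  obtain ⟨f, hf, rfl⟩ := Finset.mem_image.mp hs
  rw [Finset.card_image_of_injOn (hφ.mono (Finset.coe_subset.mpr (edge_subset_verts hf))),
    hFk f hf]

lemma copy_inter {F B' : Finset (Finset ℕ)} (h : IsCopy F B') {S1 S2 : Finset ℕ}
    (h1 : S1 ∈ B') (h2 : S2 ∈ B') (hne : S1 ≠ S2) :
    ∃ f ∈ F, ∃ g ∈ F, f ≠ g ∧ (f ∩ g).card = (S1 ∩ S2).card := by
  obtain ⟨φ, hφ, rfl⟩ := h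
  obtain ⟨f, hf, rfl⟩ := Finset.mem_image.mp h1
  obtain ⟨g, hg, rfl⟩ := Finset.mem_image.mp h2
  refine ⟨f, hf, g, hg, fun hh => hne (by rw [hh]), ?_⟩
  have hsub : (↑f ∪ ↑g : Set ℕ) ⊆ ↑(verts F) := by
    rw [Set.union_subset_iff]
    exact ⟨Finset.coe_subset.mpr (edge_subset_verts hf),
      Finset.coe_subset.mpr (edge_subset_verts hg)⟩
  rw [← Finset.image_inter_of_injOn f g (hφ.mono hsub)]
  exact (Finset.card_image_of_injOn
    (hφ.mono (Finset.coe_subset.mpr ((Finset.inter_subset_left).trans (edge_subset_verts hf))))).symm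

/-- if `F₁ = B i` and `F₂ = B j` (`i < j`) are members of a vertex-separated
loose path of copies of `F`, then `I := V(F₁) ∩ V(F₂)` satisfies `|I| = k` or
`|I| ≤ k - 1/ρ_F`; consequently for every `k`-graph `A = {e}` with one edge and no isolated
vertices with `I ⊆ V(A) = e`, one has `ρ_{A,I} ≤ ρ_F`. -/
theorem joins_are_small
    (k : ℕ) (hk : 2 ≤ k)
    (F : Finset (Finset ℕ)) (hFk : ∀ e ∈ F, e.card = k) (hF2 : 2 ≤ F.card)
    (hbal : ∀ f ∈ F, ∀ B' ⊆ F, tdens B' f ≤ kdens k F)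
    (n : ℕ) (B : ℕ → Finset (Finset ℕ)) (I0 : Finset ℕ) (hI0 : I0.card = k)
    (hpath : IsVSLoosePath n B I0) (hcopy : ∀ i < n, IsCopy F (B i))
    (i j : ℕ) (hij : i < j) (hjn : j < n) :
    ((verts (B i) ∩ verts (B j)).card = k ∨
      ((verts (B i) ∩ verts (B j)).card : ℚ) ≤ (k : ℚ) - 1 / kdens k F) ∧
    ∀ e : Finset ℕ, e.card = k → verts (B i) ∩ verts (B j) ⊆ e →
      tdens {e} (verts (B i) ∩ verts (B j)) ≤ kdens k F := by
  obtain ⟨e, hinj, he0, hBdef, hsep⟩ := hpath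
  have hin : i < n := lt_trans hij hjn
  have hcard2 : ∀ m < n, 2 ≤ (B m).card := fun m hm =>
    (copy_card_eq (hcopy m hm)) ▸ hF2
  have hedgek : ∀ m < n, ∀ s ∈ B m, s.card = k := fun m hm =>
    copy_edge_card hFk (hcopy m hm)
  have hqmono : ∀ a b : ℕ, a ≤ b → qfun B a ≤ qfun B b := by
    intro a b hab
    exact Nat.add_le_add_left
      (Finset.sum_le_sum_of_subset (Finset.range_subset_range.mpr hab)) 1
  have hq1 : ∀ m, 1 ≤ qfun B m := fun m => Nat.le_add_right 1 _
  have hqsucc : ∀ m < n, qfun B m < qfun B (m + 1) := by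
    intro m hm
    have hst : qfun B (m + 1) = qfun B m + ((B m).card - 1) := by
      unfold qfun; rw [Finset.sum_range_succ]; omega
    have := hcard2 m hm
    omega
  have hmem : ∀ m < n, ∀ idx, qfun B m - 1 ≤ idx → idx ≤ qfun B (m + 1) - 1 →
      e idx ∈ B m := by
    intro m hm idx h1 h2
    rw [hBdef m hm]
    apply Finset.mem_image_of_mem
    simp only [Finset.mem_filter, Finset.mem_range]
    have hle : qfun B (m + 1) ≤ qfun B n := hqmono _ _ hm
    have := hq1 (m + 1)
    exact ⟨by omega, h1, h2⟩
  have hIsub : ∀ m, 0 < m → m < n → i < m → m ≤ j →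
      verts (B i) ∩ verts (B j) ⊆ e (qfun B m - 1) := by
    intro m hm0 hmn him hmj
    rw [← hsep m hm0 hmn]
    apply Finset.inter_subset_inter
    · exact verts_mono (Finset.subset_biUnion_of_mem B (Finset.mem_range.mpr him))
    · exact verts_mono (Finset.subset_biUnion_of_mem B
        (Finset.mem_filter.mpr ⟨Finset.mem_range.mpr hjn, hmj⟩))
  have hkd := kdens_pos hFk hF2
  -- main claim
  have main : (verts (B i) ∩ verts (B j)).card = k ∨
      ((verts (B i) ∩ verts (B j)).card < k ∧
        1 / ((k:ℚ) - ((verts (B i) ∩ verts (B j)).card : ℚ)) ≤ kdens k F) := by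
    by_cases hcase : j = i + 1
    · left
      subst hcase
      have hS1 : e (qfun B (i + 1) - 1) ∈ B i :=
        hmem i hin _ (by have := hqsucc i hin; omega) le_rfl
      have hS2 : e (qfun B (i + 1) - 1) ∈ B (i + 1) :=
        hmem (i + 1) hjn _ le_rfl (by have := hqmono (i+1) (i+1+1) (by omega); omega)
      have hsub1 : verts (B i) ∩ verts (B (i + 1)) ⊆ e (qfun B (i + 1) - 1) :=
        hIsub (i + 1) (Nat.succ_pos i) hjn (Nat.lt_succ_self i) le_rfl
      have hsub2 : e (qfun B (i + 1) - 1) ⊆ verts (B i) ∩ verts (B (i + 1)) :=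
        Finset.subset_inter (edge_subset_verts hS1) (edge_subset_verts hS2)
      rw [Finset.Subset.antisymm hsub1 hsub2]
      exact hedgek (i + 1) hjn _ hS2
    · right
      have hj2 : i + 1 + 1 ≤ j := by omega
      have h1n : i + 1 < n := by omega
      have h2n : i + 1 + 1 ≤ n := by omega
      set S1 := e (qfun B (i + 1) - 1) with hS1def
      set S2 := e (qfun B (i + 1 + 1) - 1) with hS2def
      have hS1 : S1 ∈ B (i + 1) :=
        hmem (i + 1) h1n _ le_rfl (by have := hqmono (i+1) (i+1+1) (by omega); omega)
      have hS2 : S2 ∈ B (i + 1) :=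
        hmem (i + 1) h1n _ (by have := hqsucc (i+1) h1n; omega) le_rfl
      have hidx : qfun B (i + 1) - 1 ≠ qfun B (i + 1 + 1) - 1 := by
        have := hqsucc (i + 1) h1n
        have := hq1 (i + 1)
        omega
      have hSne : S1 ≠ S2 := by
        intro hh
        apply hidx
        refine hinj _ ?_ _ ?_ hh
        · have := hqmono (i + 1) n (by omega); have := hq1 (i+1); omega
        · have := hqmono (i + 1 + 1) n (by omega); have := hq1 (i+1+1); omega
      have hsub1 : verts (B i) ∩ verts (B j) ⊆ S1 :=
        hIsub (i + 1) (Nat.succ_pos i) h1n (Nat.lt_succ_self i) (by omega)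
      have hsub2 : verts (B i) ∩ verts (B j) ⊆ S2 :=
        hIsub (i + 1 + 1) (by omega) (by omega) (by omega) hj2
      obtain ⟨f, hf, g, hg, hfg, hcardeq⟩ := copy_inter (hcopy (i + 1) h1n) hS1 hS2 hSne
      have hIle : (verts (B i) ∩ verts (B j)).card ≤ (f ∩ g).card := by
        rw [hcardeq]
        exact Finset.card_le_card (Finset.subset_inter hsub1 hsub2)
      have hclt : (f ∩ g).card < k := inter_card_lt (hFk f hf) (hFk g hg) hfg
      constructor
      · omega
      · have hki := key_ineq hFk hbal hf hg hfg
        refine le_trans ?_ hki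
        have h1 : (0:ℚ) < (k:ℚ) - ((f ∩ g).card : ℚ) := by
          have : ((f ∩ g).card : ℚ) < (k:ℚ) := by exact_mod_cast hclt
          linarith
        apply one_div_le_one_div_of_le h1
        have : ((verts (B i) ∩ verts (B j)).card : ℚ) ≤ ((f ∩ g).card : ℚ) := by
          exact_mod_cast hIle
        linarith
  constructor
  · rcases main with h | ⟨hlt, hle⟩
    · exact Or.inl h
    · right
      have h1 : (0:ℚ) < (k:ℚ) - ((verts (B i) ∩ verts (B j)).card : ℚ) := by
        have : (((verts (B i) ∩ verts (B j)).card : ℚ)) < (k:ℚ) := by exact_mod_cast hlt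
        linarith
      have h2 : 1 ≤ kdens k F * ((k:ℚ) - ((verts (B i) ∩ verts (B j)).card : ℚ)) :=
        (div_le_iff₀ h1).mp hle
      have h3 : 1 / kdens k F ≤ (k:ℚ) - ((verts (B i) ∩ verts (B j)).card : ℚ) :=
        (div_le_iff₀ hkd).mpr (by nlinarith)
      linarith
  · intro e' he'k he'sub
    by_cases heq : verts (B i) ∩ verts (B j) = e'
    · rw [heq]
      have hz : tdens {e'} e' = 0 := by
        have hu : verts {e'} ∪ e' = e' := by rw [verts_singleton, Finset.union_self]
        unfold tdens _root_.dens
        rw [hu, if_pos rfl]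
      rw [hz]
      exact le_of_lt hkd
    · have hns : ¬ e' ⊆ verts (B i) ∩ verts (B j) := fun hh =>
        heq (Finset.Subset.antisymm he'sub hh)
      rw [tdens_singleton_of_not_subset hns]
      have hu : e' ∪ (verts (B i) ∩ verts (B j)) = e' := Finset.union_eq_left.mpr he'sub
      rw [hu, he'k]
      rcases main with h | ⟨hlt, hle⟩
      · exact absurd (Finset.eq_of_subset_of_card_le he'sub (by omega)) heq
      · exact hle
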